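/- Let μ_S and μ_T be probability measures on a measurable space X, let f_S, f_T : X → Y be the source and target labeling functions, and let H be a nonempty family of measurable hypotheses X → Y. Define the H∆H-divergence d_{H∆H}(μ_S, μ_T) := 2 · sup_{h₁, h₂ ∈ H} |ε_{μ_S}(h₁, h₂) − ε_{μ_T}(h₁, h₂)|, where ε_μ(u, v) := μ{x : u(x) ≠ v(x)} (this supremum exists since all errors lie in [0,1]). Then for every h ∈ H and every h' ∈ H, the target error is bounded as ε_{μ_T}(h, f_T) ≤ ε_{μ_S}(h, f_S) + (1/2) d_{H∆H}(μ_S, μ_T) + ε_{μ_S}(h', f_S) + ε_{μ_T}(h', f_T). In particular, ε_{μ_T}(h, f_T) ≤ ε_{μ_S}(h, f_S) + (1/2) d_{H∆H}(μ_S, μ_T) + C₀, where C₀ = inf_{h' ∈ H} [ε_{μ_S}(h', f_S) + ε_{μ_T}(h', f_T)]. -/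

import Mathlib

open MeasureTheory

/-- The classification error `ε_μ(u, v) := μ {x | u x ≠ v x}`, as a real number. -/
noncomputable def classErr {X Y : Type*} [MeasurableSpace X]
    (μ : Measure X) (u v : X → Y) : ℝ :=
  (μ {x | u x ≠ v x}).toReal

/-- The `H∆H`-divergence between `μS` and `μT` with respect to the hypothesis class `H`:
`d_{H∆H}(μS, μT) := 2 * sup_{h₁, h₂ ∈ H} |ε_{μS}(h₁, h₂) − ε_{μT}(h₁, h₂)|`. -/
noncomputable def dHDeltaH {X Y : Type*} [MeasurableSpace X]
    (μS μT : Measure X) (H : Set (X → Y)) : ℝ :=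
  2 * sSup {r : ℝ | ∃ h₁ ∈ H, ∃ h₂ ∈ H,
    r = |classErr μS h₁ h₂ - classErr μT h₁ h₂|}

lemma classErr_nonneg {X Y : Type*} [MeasurableSpace X]
    (μ : Measure X) (u v : X → Y) : 0 ≤ classErr μ u v :=
  ENNReal.toReal_nonneg

lemma classErr_le_one {X Y : Type*} [MeasurableSpace X]
    (μ : Measure X) [IsProbabilityMeasure μ] (u v : X → Y) :
    classErr μ u v ≤ 1 := by
  have := prob_le_one (μ := μ) (s := {x | u x ≠ v x})
  simpa [classErr] using ENNReal.toReal_mono ENNReal.one_ne_top this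

lemma classErr_symm {X Y : Type*} [MeasurableSpace X]
    (μ : Measure X) (u v : X → Y) : classErr μ u v = classErr μ v u := by
  have : {x | u x ≠ v x} = {x | v x ≠ u x} := by
    ext x; exact ne_comm
  unfold classErr
  rw [this]

lemma classErr_triangle {X Y : Type*} [MeasurableSpace X]
    (μ : Measure X) [IsProbabilityMeasure μ] (u v w : X → Y) :
    classErr μ u w ≤ classErr μ u v + classErr μ v w := by
  have hsub : {x | u x ≠ w x} ⊆ {x | u x ≠ v x} ∪ {x | v x ≠ w x} := by
    intro x hx
    by_contra hc
    simp only [Set.mem_union, Set.mem_setOf_eq, not_or, not_not] at hc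
    exact hx (hc.1.trans hc.2)
  have h1 : μ {x | u x ≠ w x} ≤ μ {x | u x ≠ v x} + μ {x | v x ≠ w x} :=
    le_trans (measure_mono hsub) (measure_union_le _ _)
  unfold classErr
  calc (μ {x | u x ≠ w x}).toReal
      ≤ (μ {x | u x ≠ v x} + μ {x | v x ≠ w x}).toReal :=
        ENNReal.toReal_mono (by finiteness) h1
    _ = (μ {x | u x ≠ v x}).toReal + (μ {x | v x ≠ w x}).toReal :=
        ENNReal.toReal_add (by finiteness) (by finiteness)

/-- Ben-David et al. bound: for probability measures `μS, μT` on `X`, labeling functions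
`fS, fT : X → Y`, and a nonempty family `H` of measurable hypotheses, for every `h ∈ H` and
every `h' ∈ H`,
`ε_{μT}(h, fT) ≤ ε_{μS}(h, fS) + (1/2) d_{H∆H}(μS, μT) + ε_{μS}(h', fS) + ε_{μT}(h', fT)`;
in particular `ε_{μT}(h, fT) ≤ ε_{μS}(h, fS) + (1/2) d_{H∆H}(μS, μT) + C₀`, where
`C₀ = inf_{h' ∈ H} [ε_{μS}(h', fS) + ε_{μT}(h', fT)]`. -/
theorem target_error_bound
    {X Y : Type*} [MeasurableSpace X] [MeasurableSpace Y]
    (μS μT : Measure X) [IsProbabilityMeasure μS] [IsProbabilityMeasure μT]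
    (fS fT : X → Y) (hfS : Measurable fS) (hfT : Measurable fT)
    (H : Set (X → Y)) (hHne : H.Nonempty) (hHmeas : ∀ h ∈ H, Measurable h)
    (hmeas : ∀ u v : X → Y, Measurable u → Measurable v →
      MeasurableSet {x | u x ≠ v x})
    (h : X → Y) (hh : h ∈ H) :
    (∀ h' ∈ H,
      classErr μT h fT ≤
        classErr μS h fS + (1 / 2) * dHDeltaH μS μT H +
          classErr μS h' fS + classErr μT h' fT) ∧
    classErr μT h fT ≤
      classErr μS h fS + (1 / 2) * dHDeltaH μS μT H +
        sInf {r : ℝ | ∃ h' ∈ H, r = classErr μS h' fS + classErr μT h' fT} := by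
  set S : Set ℝ := {r : ℝ | ∃ h₁ ∈ H, ∃ h₂ ∈ H,
    r = |classErr μS h₁ h₂ - classErr μT h₁ h₂|} with hS
  have hbdd : BddAbove S := by
    refine ⟨1, ?_⟩
    rintro r ⟨h₁, _, h₂, _, rfl⟩
    rw [abs_sub_le_iff]
    constructor
    · linarith [classErr_le_one μS h₁ h₂, classErr_nonneg μT h₁ h₂]
    · linarith [classErr_le_one μT h₁ h₂, classErr_nonneg μS h₁ h₂]
  have key : ∀ h' ∈ H,
      classErr μT h fT ≤
        classErr μS h fS + (1 / 2) * dHDeltaH μS μT H +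
          classErr μS h' fS + classErr μT h' fT := by
    intro h' hh'
    have hmem : |classErr μS h h' - classErr μT h h'| ∈ S :=
      ⟨h, hh, h', hh', rfl⟩
    have hsup : |classErr μS h h' - classErr μT h h'| ≤ sSup S :=
      le_csSup hbdd hmem
    have hd : (1 / 2) * dHDeltaH μS μT H = sSup S := by
      unfold dHDeltaH; rw [← hS]; ring
    have t1 : classErr μT h fT ≤ classErr μT h h' + classErr μT h' fT :=
      classErr_triangle μT h h' fT
    have t2 : classErr μT h h' ≤ classErr μS h h' +
        |classErr μS h h' - classErr μT h h'| := by
      linarith [neg_abs_le (classErr μS h h' - classErr μT h h')]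
    have t3 : classErr μS h h' ≤ classErr μS h fS + classErr μS h' fS := by
      have := classErr_triangle μS h fS h'
      rw [classErr_symm μS fS h'] at this
      exact this
    rw [hd]
    linarith
  refine ⟨key, ?_⟩
  have hne' : {r : ℝ | ∃ h' ∈ H, r = classErr μS h' fS + classErr μT h' fT}.Nonempty := by
    obtain ⟨h', hh'⟩ := hHne
    exact ⟨_, h', hh', rfl⟩
  have : classErr μT h fT - (classErr μS h fS + (1 / 2) * dHDeltaH μS μT H) ≤
      sInf {r : ℝ | ∃ h' ∈ H, r = classErr μS h' fS + classErr μT h' fT} := by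
    apply le_csInf hne'
    rintro r ⟨h', hh', rfl⟩
    have := key h' hh'
    linarith
  linarith
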